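/- Fix ω₀ > 0. The function β₂ ↦ T(β₂; ω₀) = (2√6 / √(ρ(β₂; ω₀))) · K(k(β₂; ω₀)) is strictly decreasing on the interval (0, 2ω₀). -/

import Mathlib

/-- The complete elliptic integral of the first kind,
`K(k) = ∫₀¹ dt / √((1 − t²)(1 − k²t²))`. -/
noncomputable def ellipticK (k : ℝ) : ℝ :=
  ∫ t in (0 : ℝ)..1, 1 / Real.sqrt ((1 - t ^ 2) * (1 - k ^ 2 * t ^ 2))

/-- `ρ(β₂; ω₀) = √(9ω₀² − 3β₂² + 6ω₀β₂)`. -/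
noncomputable def rho (ω₀ β₂ : ℝ) : ℝ :=
  Real.sqrt (9 * ω₀ ^ 2 - 3 * β₂ ^ 2 + 6 * ω₀ * β₂)

/-- The elliptic modulus `k(β₂; ω₀) ∈ (0,1)`, defined by
`k² = 1/2 + 3(ω₀ − β₂)/(2ρ(β₂; ω₀))`. -/
noncomputable def modulus (ω₀ β₂ : ℝ) : ℝ :=
  Real.sqrt (1 / 2 + 3 * (ω₀ - β₂) / (2 * rho ω₀ β₂))

/-- The period function `T(β₂; ω₀) = (2√6/√(ρ(β₂; ω₀))) K(k(β₂; ω₀))`. -/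
noncomputable def periodT (ω₀ β₂ : ℝ) : ℝ :=
  2 * Real.sqrt 6 / Real.sqrt (rho ω₀ β₂) * ellipticK (modulus ω₀ β₂)

open Real Set MeasureTheory intervalIntegral

namespace Stmt8Aux

/-- The trigonometric integrand for the period. -/
noncomputable def F (ω₀ β θ : ℝ) : ℝ :=
  (Real.sqrt (rho ω₀ β * Real.cos θ ^ 2 +
    (rho ω₀ β + 3 * (β - ω₀)) / 2 * Real.sin θ ^ 2))⁻¹

lemma quad_pos {ω₀ β : ℝ} (hω₀ : 0 < ω₀) (hβ : β ∈ Ioo 0 (2 * ω₀)) :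
    0 < 9 * ω₀ ^ 2 - 3 * β ^ 2 + 6 * ω₀ * β := by
  obtain ⟨h1, h2⟩ := hβ; nlinarith

lemma rho_pos {ω₀ β : ℝ} (hω₀ : 0 < ω₀) (hβ : β ∈ Ioo 0 (2 * ω₀)) : 0 < rho ω₀ β :=
  Real.sqrt_pos.mpr (quad_pos hω₀ hβ)

lemma rho_sq {ω₀ β : ℝ} (hω₀ : 0 < ω₀) (hβ : β ∈ Ioo 0 (2 * ω₀)) :
    rho ω₀ β ^ 2 = 9 * ω₀ ^ 2 - 3 * β ^ 2 + 6 * ω₀ * β :=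
  Real.sq_sqrt (quad_pos hω₀ hβ).le

/-- `ρ > 3(β − ω₀)` -/
lemma rho_lb1 {ω₀ β : ℝ} (hω₀ : 0 < ω₀) (hβ : β ∈ Ioo 0 (2 * ω₀)) :
    3 * (β - ω₀) < rho ω₀ β := by
  have h1 := rho_pos hω₀ hβ
  have h2 := rho_sq hω₀ hβ
  obtain ⟨ha, hb⟩ := hβ
  nlinarith [sq_nonneg (rho ω₀ β - 3 * (β - ω₀))]

/-- `ρ > 3(ω₀ − β)` -/
lemma rho_lb2 {ω₀ β : ℝ} (hω₀ : 0 < ω₀) (hβ : β ∈ Ioo 0 (2 * ω₀)) :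
    3 * (ω₀ - β) < rho ω₀ β := by
  have h1 := rho_pos hω₀ hβ
  have h2 := rho_sq hω₀ hβ
  obtain ⟨ha, hb⟩ := hβ
  nlinarith [sq_nonneg (rho ω₀ β - 3 * (ω₀ - β))]

lemma modulus_sq {ω₀ β : ℝ} (hω₀ : 0 < ω₀) (hβ : β ∈ Ioo 0 (2 * ω₀)) :
    modulus ω₀ β ^ 2 = 1 / 2 + 3 * (ω₀ - β) / (2 * rho ω₀ β) := by
  have h1 := rho_pos hω₀ hβ
  have h2 := rho_lb1 hω₀ hβ
  apply Real.sq_sqrt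
  have : -(1 / 2 : ℝ) < 3 * (ω₀ - β) / (2 * rho ω₀ β) := by
    rw [lt_div_iff₀ (by positivity)]; nlinarith
  linarith

lemma modulus_sq_lt_one {ω₀ β : ℝ} (hω₀ : 0 < ω₀) (hβ : β ∈ Ioo 0 (2 * ω₀)) :
    modulus ω₀ β ^ 2 < 1 := by
  rw [modulus_sq hω₀ hβ]
  have h1 := rho_pos hω₀ hβ
  have h2 := rho_lb2 hω₀ hβ
  have : 3 * (ω₀ - β) / (2 * rho ω₀ β) < 1 / 2 := by
    rw [div_lt_iff₀ (by positivity)]; nlinarith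
  linarith

/-- A convex combination of two positive numbers is positive. -/
lemma denom_pos_aux {A B c s : ℝ} (hA : 0 < A) (hB : 0 < B) (h : s ^ 2 + c ^ 2 = 1) :
    0 < A * c ^ 2 + B * s ^ 2 := by
  rcases le_or_gt (c ^ 2) (1 / 2) with h1 | h1
  · nlinarith [mul_nonneg hA.le (sq_nonneg c)]
  · nlinarith [mul_nonneg hB.le (sq_nonneg s)]

lemma B_pos {ω₀ β : ℝ} (hω₀ : 0 < ω₀) (hβ : β ∈ Ioo 0 (2 * ω₀)) :
    0 < (rho ω₀ β + 3 * (β - ω₀)) / 2 := by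
  have := rho_lb2 hω₀ hβ; linarith

/-- positivity of the trig denominator -/
lemma denom_pos {ω₀ β : ℝ} (hω₀ : 0 < ω₀) (hβ : β ∈ Ioo 0 (2 * ω₀)) (θ : ℝ) :
    0 < rho ω₀ β * Real.cos θ ^ 2 + (rho ω₀ β + 3 * (β - ω₀)) / 2 * Real.sin θ ^ 2 :=
  denom_pos_aux (rho_pos hω₀ hβ) (B_pos hω₀ hβ) (Real.sin_sq_add_cos_sq θ)

/-- The elliptic integral as a trigonometric integral. -/
lemma ellipticK_eq {k : ℝ} (hk1 : k ^ 2 < 1) :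
    ellipticK k = ∫ θ in (0 : ℝ)..(π / 2),
      (Real.sqrt (1 - k ^ 2 * Real.sin θ ^ 2))⁻¹ := by
  have hπ : (0 : ℝ) < π / 2 := by positivity
  have himg : Real.sin '' Ioo 0 (π / 2) = Ioo (0 : ℝ) 1 := by
    ext x
    constructor
    · rintro ⟨θ, hθ, rfl⟩
      refine ⟨Real.sin_pos_of_pos_of_lt_pi hθ.1 (by linarith [Real.pi_pos, hθ.2]), ?_⟩
      have h1 : θ ∈ Icc (-(π / 2)) (π / 2) := ⟨by linarith [hθ.1], hθ.2.le⟩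
      have h2 : π / 2 ∈ Icc (-(π / 2)) (π / 2) := ⟨by linarith, le_refl _⟩
      have := Real.strictMonoOn_sin h1 h2 hθ.2
      simpa [Real.sin_pi_div_two] using this
    · intro hx
      refine ⟨Real.arcsin x, ⟨Real.arcsin_pos.mpr hx.1, Real.arcsin_lt_pi_div_two.mpr hx.2⟩, ?_⟩
      exact Real.sin_arcsin (by linarith [hx.1]) hx.2.le
  have hderiv : ∀ θ ∈ Ioo (0 : ℝ) (π / 2),
      HasDerivWithinAt Real.sin (Real.cos θ) (Ioo (0 : ℝ) (π / 2)) θ :=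
    fun θ _ => (Real.hasDerivAt_sin θ).hasDerivWithinAt
  have hsub : Ioo (0 : ℝ) (π / 2) ⊆ Icc (-(π / 2)) (π / 2) :=
    fun θ hθ => ⟨by linarith [hθ.1, Real.pi_pos], hθ.2.le⟩
  have hinj : InjOn Real.sin (Ioo (0 : ℝ) (π / 2)) := Real.injOn_sin.mono hsub
  rw [ellipticK, intervalIntegral.integral_of_le (by norm_num : (0:ℝ) ≤ 1),
    MeasureTheory.integral_Ioc_eq_integral_Ioo, ← himg,
    MeasureTheory.integral_image_eq_integral_abs_deriv_smul measurableSet_Ioo hderiv hinj,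
    intervalIntegral.integral_of_le hπ.le, MeasureTheory.integral_Ioc_eq_integral_Ioo]
  apply MeasureTheory.setIntegral_congr_fun measurableSet_Ioo
  intro θ hθ
  have hcos : 0 < Real.cos θ :=
    Real.cos_pos_of_mem_Ioo ⟨by linarith [hθ.1, Real.pi_pos], hθ.2⟩
  have hsle : Real.sin θ ^ 2 ≤ 1 := Real.sin_sq_le_one θ
  have hX : 0 < 1 - k ^ 2 * Real.sin θ ^ 2 := by
    have := mul_le_mul_of_nonneg_left hsle (sq_nonneg k)
    simp only [mul_one] at this
    linarith
  have h1s : 1 - Real.sin θ ^ 2 = Real.cos θ ^ 2 := by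
    have := Real.sin_sq_add_cos_sq θ; linarith
  simp only [smul_eq_mul, abs_of_pos hcos]
  rw [h1s, Real.sqrt_mul (sq_nonneg _), Real.sqrt_sq hcos.le]
  rw [one_div, mul_inv, ← mul_assoc, mul_inv_cancel₀ hcos.ne', one_mul]

/-- The period as a trigonometric integral. -/
lemma periodT_eq {ω₀ β : ℝ} (hω₀ : 0 < ω₀) (hβ : β ∈ Ioo 0 (2 * ω₀)) :
    periodT ω₀ β = 2 * Real.sqrt 6 * ∫ θ in (0 : ℝ)..(π / 2), F ω₀ β θ := by
  have hr := rho_pos hω₀ hβ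
  have hm2 := modulus_sq hω₀ hβ
  have hk1 : modulus ω₀ β ^ 2 < 1 := modulus_sq_lt_one hω₀ hβ
  have hρk : rho ω₀ β * modulus ω₀ β ^ 2 = rho ω₀ β / 2 + 3 * (ω₀ - β) / 2 := by
    rw [hm2]; field_simp
  have hint : (∫ θ in (0 : ℝ)..(π / 2), F ω₀ β θ)
      = (Real.sqrt (rho ω₀ β))⁻¹ *
        ∫ θ in (0 : ℝ)..(π / 2), (Real.sqrt (1 - modulus ω₀ β ^ 2 * Real.sin θ ^ 2))⁻¹ := by
    rw [← intervalIntegral.integral_const_mul]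
    apply intervalIntegral.integral_congr
    intro θ _
    have hcs := Real.sin_sq_add_cos_sq θ
    dsimp only
    rw [F, ← mul_inv, ← Real.sqrt_mul hr.le]
    congr 2
    linear_combination (Real.sin θ ^ 2) * hρk + (rho ω₀ β) * hcs
  rw [periodT, ellipticK_eq hk1, hint, div_eq_mul_inv]
  ring

/-- `σ = ρ + β − ω₀ > 2ω₀`. -/
lemma sigma_gt {ω₀ β : ℝ} (hω₀ : 0 < ω₀) (hβ : β ∈ Ioo 0 (2 * ω₀)) :
    2 * ω₀ < rho ω₀ β + (β - ω₀) := by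
  have h1 := rho_pos hω₀ hβ
  have h2 := rho_sq hω₀ hβ
  obtain ⟨ha, hb⟩ := hβ
  nlinarith [sq_nonneg (rho ω₀ β - (3 * ω₀ - β))]

/-- `σ` is strictly increasing. -/
lemma sigma_lt {ω₀ a b : ℝ} (hω₀ : 0 < ω₀) (ha : a ∈ Ioo 0 (2 * ω₀))
    (hb : b ∈ Ioo 0 (2 * ω₀)) (hab : a < b) :
    rho ω₀ a + (a - ω₀) < rho ω₀ b + (b - ω₀) := by
  have h1 := rho_pos hω₀ ha
  have h2 := rho_pos hω₀ hb
  have e1 := rho_sq hω₀ ha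
  have e2 := rho_sq hω₀ hb
  have g1 := rho_lb1 hω₀ ha
  have g2 := rho_lb1 hω₀ hb
  nlinarith [mul_pos (sub_pos.mpr hab) (add_pos h1 h2)]

/-- Abstract core inequality. -/
lemma key_ineq {w σ1 σ2 q x1 y1 x2 y2 : ℝ} (hw : 0 < w) (h2w : 2 * w < σ1) (hσ : σ1 < σ2)
    (hq0 : 0 ≤ q) (hq1 : q ≤ 1 / 4)
    (hx1 : 0 < x1) (hy1 : 0 < y1) (hx2 : 0 < x2) (hy2 : 0 < y2)
    (hs1 : x1 + y1 = 3 / 2 * σ1)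
    (hp1 : x1 * y1 = 3 / 4 * ((σ1 ^ 2 - 4 * w ^ 2) + (16 * w ^ 2 - σ1 ^ 2) * q))
    (hs2 : x2 + y2 = 3 / 2 * σ2)
    (hp2 : x2 * y2 = 3 / 4 * ((σ2 ^ 2 - 4 * w ^ 2) + (16 * w ^ 2 - σ2 ^ 2) * q)) :
    (Real.sqrt x2)⁻¹ + (Real.sqrt y2)⁻¹ < (Real.sqrt x1)⁻¹ + (Real.sqrt y1)⁻¹ := by
  have hp1pos : 0 < x1 * y1 := mul_pos hx1 hy1
  have hp2pos : 0 < x2 * y2 := mul_pos hx2 hy2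
  have hσ1pos : 0 < σ1 := by linarith
  have hσ2pos : 0 < σ2 := by linarith
  have hσsq : σ1 ^ 2 < σ2 ^ 2 := by nlinarith
  have hplt : x1 * y1 < x2 * y2 := by
    rw [hp1, hp2]
    nlinarith [mul_pos (sub_pos.mpr hσsq) (show (0:ℝ) < 1 - q by linarith)]
  have hsp : (x2 + y2) * (x1 * y1) < (x1 + y1) * (x2 * y2) := by
    rw [hs1, hs2, hp1, hp2]
    have hb1 : 0 < (1 - q) * (σ1 * σ2) :=
      mul_pos (by linarith) (mul_pos hσ1pos hσ2pos)
    have hb2 : 0 ≤ 4 * w ^ 2 * (1 - 4 * q) := by nlinarith [sq_nonneg w]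
    have hkey : 0 < (σ2 - σ1) * ((1 - q) * (σ1 * σ2) + 4 * w ^ 2 * (1 - 4 * q)) :=
      mul_pos (sub_pos.mpr hσ) (by linarith)
    nlinarith [hkey]
  have sq1 : ((Real.sqrt x1)⁻¹ + (Real.sqrt y1)⁻¹) ^ 2
      = x1⁻¹ + y1⁻¹ + 2 * (Real.sqrt (x1 * y1))⁻¹ := by
    rw [add_sq, mul_assoc, ← mul_inv, ← Real.sqrt_mul hx1.le, inv_pow, inv_pow,
      Real.sq_sqrt hx1.le, Real.sq_sqrt hy1.le]
    ring
  have sq2 : ((Real.sqrt x2)⁻¹ + (Real.sqrt y2)⁻¹) ^ 2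
      = x2⁻¹ + y2⁻¹ + 2 * (Real.sqrt (x2 * y2))⁻¹ := by
    rw [add_sq, mul_assoc, ← mul_inv, ← Real.sqrt_mul hx2.le, inv_pow, inv_pow,
      Real.sq_sqrt hx2.le, Real.sq_sqrt hy2.le]
    ring
  have hterm1 : x2⁻¹ + y2⁻¹ < x1⁻¹ + y1⁻¹ := by
    have e1 : x1⁻¹ + y1⁻¹ = (x1 + y1) / (x1 * y1) := by
      field_simp; ring
    have e2 : x2⁻¹ + y2⁻¹ = (x2 + y2) / (x2 * y2) := by
      field_simp; ring
    rw [e1, e2, div_lt_div_iff₀ hp2pos hp1pos]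
    exact hsp
  have hterm2 : (Real.sqrt (x2 * y2))⁻¹ < (Real.sqrt (x1 * y1))⁻¹ := by
    apply inv_strictAnti₀ (Real.sqrt_pos.mpr hp1pos)
    exact Real.sqrt_lt_sqrt hp1pos.le hplt
  have hsqlt : ((Real.sqrt x2)⁻¹ + (Real.sqrt y2)⁻¹) ^ 2
      < ((Real.sqrt x1)⁻¹ + (Real.sqrt y1)⁻¹) ^ 2 := by
    rw [sq1, sq2]; linarith
  have h1nn : 0 ≤ (Real.sqrt x1)⁻¹ + (Real.sqrt y1)⁻¹ := by positivity
  exact lt_of_pow_lt_pow_left₀ 2 h1nn hsqlt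

/-- Pointwise comparison of the symmetrized integrands. -/
lemma pointwise {ω₀ a b : ℝ} (hω₀ : 0 < ω₀) (ha : a ∈ Ioo 0 (2 * ω₀))
    (hb : b ∈ Ioo 0 (2 * ω₀)) (hab : a < b) (θ : ℝ) :
    F ω₀ b θ + F ω₀ b (π / 2 - θ) < F ω₀ a θ + F ω₀ a (π / 2 - θ) := by
  have hcs : Real.sin θ ^ 2 + Real.cos θ ^ 2 = 1 := Real.sin_sq_add_cos_sq θ
  have hcs' : Real.cos θ ^ 2 + Real.sin θ ^ 2 = 1 := by linarith
  have hra := rho_pos hω₀ ha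
  have hrb := rho_pos hω₀ hb
  have ea := rho_sq hω₀ ha
  have eb := rho_sq hω₀ hb
  have hBa := B_pos hω₀ ha
  have hBb := B_pos hω₀ hb
  simp only [F, Real.cos_pi_div_two_sub, Real.sin_pi_div_two_sub]
  refine key_ineq (w := ω₀) (σ1 := rho ω₀ a + (a - ω₀)) (σ2 := rho ω₀ b + (b - ω₀))
    (q := Real.sin θ ^ 2 * Real.cos θ ^ 2)
    hω₀ (sigma_gt hω₀ ha) (sigma_lt hω₀ ha hb hab)
    (by positivity) ?_
    (denom_pos_aux hra hBa hcs) (denom_pos_aux hra hBa hcs')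
    (denom_pos_aux hrb hBb hcs) (denom_pos_aux hrb hBb hcs')
    ?_ ?_ ?_ ?_
  · nlinarith [sq_nonneg (Real.sin θ ^ 2 - Real.cos θ ^ 2)]
  · rw [Real.cos_sq']; ring
  · rw [Real.cos_sq']
    linear_combination (Real.sin θ ^ 2 * (1 - Real.sin θ ^ 2) - 1 / 4) * ea
  · rw [Real.cos_sq']; ring
  · rw [Real.cos_sq']
    linear_combination (Real.sin θ ^ 2 * (1 - Real.sin θ ^ 2) - 1 / 4) * eb

end Stmt8Aux

open Stmt8Aux in
/-- For fixed `ω₀ > 0`, the period function `β₂ ↦ T(β₂; ω₀)` is strictly decreasing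
on `(0, 2ω₀)`. -/
theorem stmt_8 (ω₀ : ℝ) (hω₀ : 0 < ω₀) :
    StrictAntiOn (fun β₂ => periodT ω₀ β₂) (Set.Ioo 0 (2 * ω₀)) := by
  intro a ha b hb hab
  simp only
  rw [periodT_eq hω₀ ha, periodT_eq hω₀ hb]
  have hπ : (0 : ℝ) < π / 2 := by positivity
  have hca : Continuous (F ω₀ a) := by
    apply Continuous.inv₀
    · exact Real.continuous_sqrt.comp (by continuity)
    · intro θ
      exact (Real.sqrt_pos.mpr (denom_pos hω₀ ha θ)).ne'
  have hcb : Continuous (F ω₀ b) := by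
    apply Continuous.inv₀
    · exact Real.continuous_sqrt.comp (by continuity)
    · intro θ
      exact (Real.sqrt_pos.mpr (denom_pos hω₀ hb θ)).ne'
  have hcar : Continuous (fun θ => F ω₀ a (π / 2 - θ)) := hca.comp (by continuity)
  have hcbr : Continuous (fun θ => F ω₀ b (π / 2 - θ)) := hcb.comp (by continuity)
  have hrefla : (∫ θ in (0:ℝ)..(π/2), F ω₀ a (π / 2 - θ)) = ∫ θ in (0:ℝ)..(π/2), F ω₀ a θ := by
    simpa using intervalIntegral.integral_comp_sub_left (F ω₀ a) (π / 2)
  have hreflb : (∫ θ in (0:ℝ)..(π/2), F ω₀ b (π / 2 - θ)) = ∫ θ in (0:ℝ)..(π/2), F ω₀ b θ := by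
    simpa using intervalIntegral.integral_comp_sub_left (F ω₀ b) (π / 2)
  have hpos : 0 < ∫ θ in (0:ℝ)..(π/2),
      ((F ω₀ a θ + F ω₀ a (π / 2 - θ)) - (F ω₀ b θ + F ω₀ b (π / 2 - θ))) := by
    apply intervalIntegral.intervalIntegral_pos_of_pos_on
    · apply IntervalIntegrable.sub
      · exact (hca.add hcar).intervalIntegrable _ _
      · exact (hcb.add hcbr).intervalIntegrable _ _
    · intro θ _
      have key := pointwise hω₀ ha hb hab θ
      linarith
    · exact hπ
  have hint : (∫ θ in (0:ℝ)..(π/2),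
        ((F ω₀ a θ + F ω₀ a (π / 2 - θ)) - (F ω₀ b θ + F ω₀ b (π / 2 - θ))))
      = ((∫ θ in (0:ℝ)..(π/2), F ω₀ a θ) + (∫ θ in (0:ℝ)..(π/2), F ω₀ a (π / 2 - θ)))
        - ((∫ θ in (0:ℝ)..(π/2), F ω₀ b θ) + (∫ θ in (0:ℝ)..(π/2), F ω₀ b (π / 2 - θ))) := by
    rw [intervalIntegral.integral_sub (f := fun θ => F ω₀ a θ + F ω₀ a (π / 2 - θ))
      (g := fun θ => F ω₀ b θ + F ω₀ b (π / 2 - θ)) ((hca.add hcar).intervalIntegrable _ _)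
      ((hcb.add hcbr).intervalIntegrable _ _),
      intervalIntegral.integral_add (hca.intervalIntegrable _ _) (hcar.intervalIntegrable _ _),
      intervalIntegral.integral_add (hcb.intervalIntegrable _ _) (hcbr.intervalIntegrable _ _)]
  rw [hint, hrefla, hreflb] at hpos
  have h6 : (0:ℝ) < 2 * Real.sqrt 6 := by positivity
  apply mul_lt_mul_of_pos_left _ h6
  linarith
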